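/- arXiv:0906.2896 — 2 statements merged into one kernel-verified Lean document; each statement's English description precedes it below -/
import Mathlib

section
/- Let X₁ and X₂ be topological spaces. The maximal limit sets of the product space X₁ × X₂ are precisely the sets of the form M₁ × M₂, where M₁ is a maximal limit set of X₁ and M₂ is a maximal limit set of X₂. Moreover, every limit set of X₁ × X₂ is contained in such a product M₁ × M₂. -/
/-- `L` is a limit set if there is a net (equivalently, a proper filter) converging to
every point of `L`. -/
def IsLimitSet {X : Type*} [TopologicalSpace X] (L : Set X) : Prop :=
  ∃ F : Filter X, F.NeBot ∧ ∀ x ∈ L, F ≤ nhds x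

/-- A maximal limit set is a limit set not properly contained in any other limit set. -/
def IsMaxLimitSet {X : Type*} [TopologicalSpace X] (M : Set X) : Prop :=
  IsLimitSet M ∧ ∀ L : Set X, IsLimitSet L → M ⊆ L → L = M

/-- The lower Vietoris topology on `Set X`. -/
def lowerVietoris (X : Type*) [TopologicalSpace X] : TopologicalSpace (Set X) :=
  TopologicalSpace.generateFrom
    {V : Set (Set X) | ∃ U : Set X, IsOpen U ∧ V = {F : Set X | (F ∩ U).Nonempty}}

/-- `ℳℒ(X)`: the space of maximal limit sets of `X`, with the subspace topology
inherited from the lower Vietoris topology. -/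
def MLS (X : Type*) [TopologicalSpace X] : Type _ :=
  {M : Set X // IsMaxLimitSet M}

instance (X : Type*) [TopologicalSpace X] : TopologicalSpace (MLS X) :=
  TopologicalSpace.induced Subtype.val (lowerVietoris X)

/-!
A limit set of `X₁ × X₂` projects to limit sets of the factors, and products of limit sets are
limit sets (take the product filter). By Zorn's lemma every limit set lies in a maximal one, so a
limit set `L` lies in `M₁ ×ˢ M₂` with `M₁ ⊇ fst '' L`, `M₂ ⊇ snd '' L` maximal. Conversely, if
`M₁ ×ˢ M₂ ⊆ L` with `M₁`, `M₂` maximal (hence nonempty), the projections of `L` contain, hence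
equal, `M₁` and `M₂`, which forces `L = M₁ ×ˢ M₂`.
-/

open Filter Set Topology

section

variable {X Y : Type*} [TopologicalSpace X] [TopologicalSpace Y]

lemma isLimitSet_iff_neBot {L : Set X} : IsLimitSet L ↔ (⨅ x ∈ L, 𝓝 x).NeBot :=
  ⟨fun ⟨_, hF, hle⟩ => hF.mono (le_iInf₂ hle), fun h => ⟨_, h, fun x hx => iInf₂_le x hx⟩⟩

lemma isLimitSet_sUnion_of_isChain {c : Set (Set X)} (hc : ∀ s ∈ c, IsLimitSet s)
    (hchain : IsChain (· ⊆ ·) c) (hne : c.Nonempty) : IsLimitSet (⋃₀ c) := by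
  have : Nonempty c := hne.to_subtype
  have hdir : Directed (· ≥ ·) fun s : c => ⨅ x ∈ (s : Set X), 𝓝 x :=
    (directedOn_iff_directed.1 hchain.directedOn).mono_comp (g := fun s => ⨅ x ∈ s, 𝓝 x) _
      fun _ _ h => biInf_mono h
  refine ⟨⨅ s : c, ⨅ x ∈ (s : Set X), 𝓝 x,
    iInf_neBot_of_directed' hdir fun s => isLimitSet_iff_neBot.1 (hc s s.2), ?_⟩
  rintro x ⟨s, hs, hx⟩
  exact (iInf_le _ ⟨s, hs⟩).trans (iInf₂_le x hx)

lemma IsLimitSet.exists_isMaxLimitSet_superset {L : Set X} (hL : IsLimitSet L) :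
    ∃ M, IsMaxLimitSet M ∧ L ⊆ M := by
  obtain ⟨M, hLM, hmax⟩ := zorn_subset_nonempty {S : Set X | IsLimitSet S}
    (fun c hc hchain hne => ⟨⋃₀ c, isLimitSet_sUnion_of_isChain hc hchain hne,
      fun _ => subset_sUnion_of_mem⟩) L hL
  exact ⟨M, ⟨hmax.prop, fun L' hL' hML' => (hmax.eq_of_subset hL' hML').symm⟩, hLM⟩

lemma IsMaxLimitSet.nonempty {M : Set X} (hM : IsMaxLimitSet M) : M.Nonempty := by
  obtain ⟨F, hF, -⟩ := hM.1
  obtain ⟨x⟩ := hF.nonempty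
  rcases M.eq_empty_or_nonempty with rfl | h
  · exact hM.2 {x} ⟨𝓝 x, inferInstance, fun y hy => hy ▸ le_rfl⟩ (empty_subset _) ▸
      singleton_nonempty x
  · exact h

lemma IsLimitSet.image {L : Set X} (hL : IsLimitSet L) {f : X → Y} (hf : Continuous f) :
    IsLimitSet (f '' L) := by
  obtain ⟨F, hF, hle⟩ := hL
  refine ⟨F.map f, hF.map f, ?_⟩
  rintro _ ⟨x, hx, rfl⟩
  exact (hf.tendsto x).mono_left (hle x hx)

lemma IsLimitSet.prod {L₁ : Set X} {L₂ : Set Y} (h₁ : IsLimitSet L₁) (h₂ : IsLimitSet L₂) :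
    IsLimitSet (L₁ ×ˢ L₂) := by
  obtain ⟨F₁, hF₁, hle₁⟩ := h₁
  obtain ⟨F₂, hF₂, hle₂⟩ := h₂
  refine ⟨F₁ ×ˢ F₂, prod_neBot.2 ⟨hF₁, hF₂⟩, ?_⟩
  rintro ⟨x₁, x₂⟩ ⟨hx₁, hx₂⟩
  rw [nhds_prod_eq]
  exact prod_mono (hle₁ x₁ hx₁) (hle₂ x₂ hx₂)

lemma IsLimitSet.exists_subset_prod_isMaxLimitSet {L : Set (X × Y)} (hL : IsLimitSet L) :
    ∃ (M₁ : Set X) (M₂ : Set Y), IsMaxLimitSet M₁ ∧ IsMaxLimitSet M₂ ∧ L ⊆ M₁ ×ˢ M₂ := by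
  obtain ⟨M₁, hM₁, h₁⟩ := (hL.image continuous_fst).exists_isMaxLimitSet_superset
  obtain ⟨M₂, hM₂, h₂⟩ := (hL.image continuous_snd).exists_isMaxLimitSet_superset
  exact ⟨M₁, M₂, hM₁, hM₂, subset_fst_image_prod_snd_image.trans (prod_mono h₁ h₂)⟩

lemma IsMaxLimitSet.prod {M₁ : Set X} {M₂ : Set Y} (h₁ : IsMaxLimitSet M₁)
    (h₂ : IsMaxLimitSet M₂) : IsMaxLimitSet (M₁ ×ˢ M₂) := by
  refine ⟨h₁.1.prod h₂.1, fun L hL hsub => ?_⟩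
  have e₁ : Prod.fst '' L = M₁ := h₁.2 _ (hL.image continuous_fst) <| by
    simpa only [fst_image_prod _ h₂.nonempty] using image_mono (f := Prod.fst) hsub
  have e₂ : Prod.snd '' L = M₂ := h₂.2 _ (hL.image continuous_snd) <| by
    simpa only [snd_image_prod h₁.nonempty] using image_mono (f := Prod.snd) hsub
  exact (subset_fst_image_prod_snd_image.trans_eq (by rw [e₁, e₂])).antisymm hsub

end

/-- The maximal limit sets of a product space are exactly the products of maximal limit
sets of the factors, and every limit set of the product is contained in such a product. -/
theorem maxLimitSet_prod_iff (X₁ X₂ : Type*) [TopologicalSpace X₁] [TopologicalSpace X₂] :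
    (∀ M : Set (X₁ × X₂), IsMaxLimitSet M ↔
      ∃ (M₁ : Set X₁) (M₂ : Set X₂), IsMaxLimitSet M₁ ∧ IsMaxLimitSet M₂ ∧ M = M₁ ×ˢ M₂) ∧
    (∀ L : Set (X₁ × X₂), IsLimitSet L →
      ∃ (M₁ : Set X₁) (M₂ : Set X₂), IsMaxLimitSet M₁ ∧ IsMaxLimitSet M₂ ∧ L ⊆ M₁ ×ˢ M₂) := by
  refine ⟨fun M => ⟨fun hM => ?_, ?_⟩, fun L hL => hL.exists_subset_prod_isMaxLimitSet⟩
  · obtain ⟨M₁, M₂, hM₁, hM₂, hsub⟩ := hM.1.exists_subset_prod_isMaxLimitSet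
    exact ⟨M₁, M₂, hM₁, hM₂, (hM.2 _ (hM₁.1.prod hM₂.1) hsub).symm⟩
  · rintro ⟨M₁, M₂, hM₁, hM₂, rfl⟩
    exact hM₁.prod hM₂
end

section
/- Let X₁, X₂, and Y be topological spaces and let φ be a homeomorphism of X₁ × X₂ onto a dense subset Z of Y. Suppose there is a continuous map ψ : Y → X₁ × X₂ such that ψ ∘ φ is the identity map of X₁ × X₂, and such that for each pair (M₁, M₂) of maximal limit sets of X₁ and X₂, ψ⁻¹(M₁ × M₂) equals the closure of φ(M₁ × M₂) in Y. Then the map Θ(M₁, M₂) := ψ⁻¹(M₁ × M₂) from ℳℒ(X₁) × ℳℒ(X₂) to ℳℒ(Y) is open onto its image: for all open sets V₁ ⊆ X₁ and V₂ ⊆ X₂, the image under Θ of {(M₁, M₂) ∈ ℳℒ(X₁) × ℳℒ(X₂) : M₁ ∩ V₁ ≠ ∅ and M₂ ∩ V₂ ≠ ∅} is relatively open in the image of Θ. -/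
/-! Since `ψ` is surjective (it has the right inverse `φ`), `ψ⁻¹(M₁ × M₂)` meets the open set
`ψ⁻¹(V₁ × V₂)` exactly when `M₁` meets `V₁` and `M₂` meets `V₂`. So the set of pairs in
question is the preimage under `Θ` of a basic lower Vietoris open set, and its image is that
open set intersected with the range of `Θ`. -/

theorem isOpen_lowerVietoris_setOf_inter_nonempty {X : Type*} [TopologicalSpace X]
    {U : Set X} (hU : IsOpen U) :
    @IsOpen _ (lowerVietoris X) {F : Set X | (F ∩ U).Nonempty} :=
  TopologicalSpace.GenerateOpen.basic _ ⟨U, hU, rfl⟩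

theorem Function.Surjective.preimage_prod_inter_preimage_prod_nonempty_iff
    {Z α β : Type*} {ψ : Z → α × β} (hψ : Function.Surjective ψ)
    (s₁ t₁ : Set α) (s₂ t₂ : Set β) :
    (ψ ⁻¹' (s₁ ×ˢ s₂) ∩ ψ ⁻¹' (t₁ ×ˢ t₂)).Nonempty ↔
      (s₁ ∩ t₁).Nonempty ∧ (s₂ ∩ t₂).Nonempty := by
  rw [← Set.preimage_inter, hψ.nonempty_preimage, Set.prod_inter_prod, Set.prod_nonempty_iff]

theorem theta_openMap_general {X₁ X₂ Y : Type*} [TopologicalSpace X₁]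
    [TopologicalSpace X₂] [TopologicalSpace Y] (φ : X₁ × X₂ → Y)
    (ψ : Y → X₁ × X₂) (hψ : Continuous ψ) (hretr : ψ ∘ φ = id)
    {V₁ : Set X₁} {V₂ : Set X₂} (hV₁ : IsOpen V₁) (hV₂ : IsOpen V₂) :
    ∃ W : Set (Set Y), @IsOpen _ (lowerVietoris Y) W ∧
      (fun p : MLS X₁ × MLS X₂ => ψ ⁻¹' (p.1.1 ×ˢ p.2.1)) ''
          {p : MLS X₁ × MLS X₂ | (p.1.1 ∩ V₁).Nonempty ∧ (p.2.1 ∩ V₂).Nonempty}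
        = W ∩ Set.range (fun p : MLS X₁ × MLS X₂ => ψ ⁻¹' (p.1.1 ×ˢ p.2.1)) := by
  have hsurj : Function.Surjective ψ := Function.RightInverse.surjective (congrFun hretr)
  refine ⟨{F : Set Y | (F ∩ ψ ⁻¹' (V₁ ×ˢ V₂)).Nonempty},
    isOpen_lowerVietoris_setOf_inter_nonempty ((hV₁.prod hV₂).preimage hψ), ?_⟩
  rw [← Set.image_preimage_eq_inter_range]
  congr 1
  ext p
  exact (hsurj.preimage_prod_inter_preimage_prod_nonempty_iff _ _ _ _).symm

/-- Under the hypotheses of the retraction lemma, the map `Θ(M₁, M₂) = ψ⁻¹(M₁ × M₂)` is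
open onto its image: for open `V₁ ⊆ X₁`, `V₂ ⊆ X₂`, the image under `Θ` of the pairs
`(M₁, M₂)` with `M₁ ∩ V₁ ≠ ∅` and `M₂ ∩ V₂ ≠ ∅` is relatively open (for the lower
Vietoris topology) in the image of `Θ`. -/
theorem theta_openMap {X₁ X₂ Y : Type*} [TopologicalSpace X₁]
    [TopologicalSpace X₂] [TopologicalSpace Y] (φ : X₁ × X₂ → Y)
    (hφ : Topology.IsEmbedding φ) (hdense : DenseRange φ)
    (ψ : Y → X₁ × X₂) (hψ : Continuous ψ) (hretr : ψ ∘ φ = id)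
    (hcl : ∀ (M₁ : Set X₁) (M₂ : Set X₂), IsMaxLimitSet M₁ → IsMaxLimitSet M₂ →
      ψ ⁻¹' (M₁ ×ˢ M₂) = closure (φ '' (M₁ ×ˢ M₂)))
    {V₁ : Set X₁} {V₂ : Set X₂} (hV₁ : IsOpen V₁) (hV₂ : IsOpen V₂) :
    ∃ W : Set (Set Y), @IsOpen _ (lowerVietoris Y) W ∧
      (fun p : MLS X₁ × MLS X₂ => ψ ⁻¹' (p.1.1 ×ˢ p.2.1)) ''
          {p : MLS X₁ × MLS X₂ | (p.1.1 ∩ V₁).Nonempty ∧ (p.2.1 ∩ V₂).Nonempty}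
        = W ∩ Set.range (fun p : MLS X₁ × MLS X₂ => ψ ⁻¹' (p.1.1 ×ˢ p.2.1)) :=
  theta_openMap_general φ ψ hψ hretr hV₁ hV₂
end
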